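/- arXiv:1207.6894 — 9 statements merged into one kernel-verified Lean document; each statement's English description precedes it below -/
import Mathlib

section
/- Let M ⊆ ℝ^n be a nonempty closed convex set and q ∈ ℝ^n with q ∉ M. Let K ⊆ ℝ^n be a compact convex set containing 0, let a ≥ 0 and w ∈ ℝ^n with w ∈ a·K, and let δ > 0 and p > 1. Then the set D = { λ ∈ [0, ∞) : (λ·(M − q)) ∩ ((a^p + λδ)^{1/p}·K − w) ≠ ∅ } contains 0 and is a compact subset of [0, ∞); in particular D has a greatest element. -/
open Pointwise

/-- The set `D` of nonnegative `λ` for which `λ·(M − q)` meets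
`(a^p + λδ)^{1/p}·K − w`. -/
def resolvingSet (n : ℕ) (M K : Set (EuclideanSpace ℝ (Fin n)))
    (q w : EuclideanSpace ℝ (Fin n)) (a δ p : ℝ) : Set ℝ :=
  {lam : ℝ | 0 ≤ lam ∧
    ((lam • ((· - q) '' M)) ∩
      ((· - w) '' (((a ^ p + lam * δ) ^ (1 / p)) • K))).Nonempty}

/-!
Separate `q` from `M` by a functional `f` with `f < u < f q` on `M`, and let `K ⊆ closedBall 0 R`.
Applying `f` to `λ • (m - q) = c(λ) • κ - w` gives `λ (f q - u) ≤ c(λ) ‖f‖ R + ‖f‖ ‖w‖`, where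
`c(λ) = (a^p + λδ)^{1/p}` grows only like `λ^{1/p}` with `1/p < 1`; so `D` is bounded.
For closedness, a limit `λ > 0` of `λₖ ∈ D` is handled by extracting `κₖ → κ` in the compact `K`:
then `mₖ = q + λₖ⁻¹ • (c(λₖ) • κₖ - w)` converges, and its limit lies in the closed set `M`.
-/

open Filter Topology

section MeetingScales

variable {E : Type*} [NormedAddCommGroup E] [NormedSpace ℝ E]

def meetingScales (M K : Set E) (q w : E) (c : ℝ → ℝ) : Set ℝ :=
  {lam | 0 ≤ lam ∧ ∃ m ∈ M, ∃ κ ∈ K, lam • (m - q) = c lam • κ - w}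

variable {M K : Set E} {q w : E} {c : ℝ → ℝ}

theorem zero_mem_meetingScales (hM : M.Nonempty) (hw : w ∈ c 0 • K) :
    0 ∈ meetingScales M K q w c := by
  obtain ⟨m, hm⟩ := hM
  obtain ⟨κ, hκ, rfl⟩ := hw
  exact ⟨le_rfl, m, hm, κ, hκ, by rw [zero_smul, sub_self]⟩

theorem isClosed_meetingScales (hM : IsClosed M) (hK : IsCompact K) (hc : Continuous c)
    (h0 : 0 ∈ meetingScales M K q w c) : IsClosed (meetingScales M K q w c) := by
  refine IsSeqClosed.isClosed fun x lam hx hlim => ?_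
  have hlam0 : 0 ≤ lam := ge_of_tendsto' hlim fun k => (hx k).1
  rcases hlam0.eq_or_lt with rfl | hpos
  · exact h0
  choose _ m hm κ hκ heq using hx
  obtain ⟨κ₀, hκ₀, φ, hφ, hκlim⟩ := hK.tendsto_subseq hκ
  have hxφ : Tendsto (fun k => x (φ k)) atTop (𝓝 lam) := hlim.comp hφ.tendsto_atTop
  set m₀ := q + lam⁻¹ • (c lam • κ₀ - w)
  have hmlim : Tendsto (fun k => q + (x (φ k))⁻¹ • (c (x (φ k)) • κ (φ k) - w)) atTop (𝓝 m₀) :=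
    tendsto_const_nhds.add <| (hxφ.inv₀ hpos.ne').smul <|
      (((hc.tendsto lam).comp hxφ).smul hκlim).sub_const w
  have hm₀ : m₀ ∈ M := by
    refine hM.mem_of_tendsto hmlim <| (hxφ.eventually (eventually_gt_nhds hpos)).mono fun k hk => ?_
    rw [← heq (φ k), inv_smul_smul₀ hk.ne', add_sub_cancel]
    exact hm (φ k)
  exact ⟨hlam0, m₀, hm₀, κ₀, hκ₀, by rw [add_sub_cancel_left, smul_inv_smul₀ hpos.ne']⟩

theorem exists_mul_le_of_mem_meetingScales (hMcl : IsClosed M) (hMcv : Convex ℝ M) (hq : q ∉ M)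
    (hK : Bornology.IsBounded K) (hc : ∀ lam, 0 ≤ lam → 0 ≤ c lam) :
    ∃ ε > 0, ∃ A ≥ 0, ∃ B ≥ 0, ∀ lam ∈ meetingScales M K q w c, lam * ε ≤ c lam * A + B := by
  obtain ⟨f, u, hfM, hfq⟩ := geometric_hahn_banach_closed_point hMcv hMcl hq
  obtain ⟨R, hR0, hR⟩ := hK.exists_pos_norm_le
  refine ⟨f q - u, sub_pos.2 hfq, ‖f‖ * R, by positivity, ‖f‖ * ‖w‖, by positivity, ?_⟩
  rintro lam ⟨hlam, m, hm, κ, hκ, h⟩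
  have hf : lam * (f q - f m) = f w + c lam * -f κ := by
    have := congrArg f h
    simp only [map_smul, map_sub, smul_eq_mul] at this
    linarith
  have hfκ : -f κ ≤ ‖f‖ * R :=
    (neg_le_abs _).trans <| (f.le_opNorm κ).trans <| by gcongr; exact hR κ hκ
  have hfw : f w ≤ ‖f‖ * ‖w‖ := (le_abs_self _).trans (f.le_opNorm w)
  have hc0 := hc lam hlam
  calc lam * (f q - u) ≤ lam * (f q - f m) := by gcongr; exact (hfM m hm).le
    _ = f w + c lam * -f κ := hf
    _ ≤ ‖f‖ * ‖w‖ + c lam * (‖f‖ * R) := by gcongr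
    _ = c lam * (‖f‖ * R) + ‖f‖ * ‖w‖ := add_comm _ _

end MeetingScales

theorem le_rpow_inv_of_mul_le_rpow_mul {x s ε C : ℝ} (hx : 0 < x) (hε : 0 < ε) (hs : s < 1)
    (h : x * ε ≤ x ^ s * C) : x ≤ (C / ε) ^ (1 - s)⁻¹ := by
  have hxs : x ^ (1 - s) ≤ C / ε := by
    rw [Real.rpow_sub hx, Real.rpow_one, div_le_div_iff₀ (Real.rpow_pos_of_pos hx s) hε]
    linarith
  calc x = (x ^ (1 - s)) ^ (1 - s)⁻¹ := (Real.rpow_rpow_inv hx.le (by linarith)).symm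
    _ ≤ (C / ε) ^ (1 - s)⁻¹ := by gcongr

theorem bddAbove_setOf_mul_le_rpow_add {ε b δ s A B : ℝ} (hε : 0 < ε) (hb : 0 ≤ b) (hδ : 0 ≤ δ)
    (hs0 : 0 ≤ s) (hs1 : s < 1) (hA : 0 ≤ A) (hB : 0 ≤ B) :
    BddAbove {x : ℝ | 0 ≤ x ∧ x * ε ≤ (b + x * δ) ^ s * A + B} := by
  set C := (b + δ) ^ s * A + B
  refine ⟨max 1 ((C / ε) ^ (1 - s)⁻¹), fun x ⟨hx0, hx⟩ => ?_⟩
  rcases le_or_gt x 1 with hx1 | hx1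
  · exact hx1.trans (le_max_left _ _)
  refine (le_rpow_inv_of_mul_le_rpow_mul (by linarith) hε hs1 ?_).trans (le_max_right _ _)
  have hxs : 1 ≤ x ^ s := Real.one_le_rpow hx1.le hs0
  have hbase : (b + x * δ) ^ s ≤ x ^ s * (b + δ) ^ s := by
    rw [← Real.mul_rpow hx0 (by positivity)]
    gcongr
    nlinarith
  calc x * ε ≤ (b + x * δ) ^ s * A + B := hx
    _ ≤ x ^ s * (b + δ) ^ s * A + x ^ s * B := by gcongr; nlinarith
    _ = x ^ s * C := by ring

theorem resolvingSet_eq_meetingScales {n : ℕ} (M K : Set (EuclideanSpace ℝ (Fin n)))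
    (q w : EuclideanSpace ℝ (Fin n)) (a δ p : ℝ) :
    resolvingSet n M K q w a δ p =
      meetingScales M K q w fun lam => (a ^ p + lam * δ) ^ (1 / p) := by
  ext lam
  simp only [resolvingSet, meetingScales, Set.mem_ofPred_eq, Set.Nonempty, Set.mem_inter_iff,
    Set.mem_smul_set, Set.mem_image]
  constructor
  · rintro ⟨h0, -, ⟨-, ⟨m, hm, rfl⟩, rfl⟩, ⟨-, ⟨κ, hκ, rfl⟩, he⟩⟩
    exact ⟨h0, m, hm, κ, hκ, he.symm⟩
  · rintro ⟨h0, m, hm, κ, hκ, he⟩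
    exact ⟨h0, _, ⟨_, ⟨m, hm, rfl⟩, rfl⟩, ⟨_, ⟨κ, hκ, rfl⟩, he.symm⟩⟩

theorem stmt_1_general (n : ℕ) (M : Set (EuclideanSpace ℝ (Fin n)))
    (hMne : M.Nonempty) (hMcl : IsClosed M) (hMcv : Convex ℝ M)
    (q : EuclideanSpace ℝ (Fin n)) (hq : q ∉ M)
    (K : Set (EuclideanSpace ℝ (Fin n))) (hKcp : IsCompact K)
    (a : ℝ) (ha : 0 ≤ a) (w : EuclideanSpace ℝ (Fin n)) (hw : w ∈ a • K)
    (δ : ℝ) (hδ : 0 < δ) (p : ℝ) (hp : 1 < p) :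
    (0 : ℝ) ∈ resolvingSet n M K q w a δ p ∧
    IsCompact (resolvingSet n M K q w a δ p) ∧
    resolvingSet n M K q w a δ p ⊆ Set.Ici 0 ∧
    ∃ lam₀ ∈ resolvingSet n M K q w a δ p,
      ∀ lam ∈ resolvingSet n M K q w a δ p, lam ≤ lam₀ := by
  have hp0 : 0 < p := one_pos.trans hp
  rw [resolvingSet_eq_meetingScales]
  set D := meetingScales M K q w fun lam => (a ^ p + lam * δ) ^ (1 / p)
  have h0 : 0 ∈ D := zero_mem_meetingScales hMne <| by
    rwa [zero_mul, add_zero, one_div, Real.rpow_rpow_inv ha hp0.ne']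
  have hclosed : IsClosed D := isClosed_meetingScales hMcl hKcp
    ((Real.continuous_rpow_const (by positivity)).comp (by fun_prop)) h0
  obtain ⟨ε, hε, A, hA, B, hB, hbound⟩ := exists_mul_le_of_mem_meetingScales hMcl hMcv hq
    hKcp.isBounded (c := fun lam => (a ^ p + lam * δ) ^ (1 / p)) fun lam hlam => by positivity
  have hbdd : BddAbove D :=
    (bddAbove_setOf_mul_le_rpow_add hε (by positivity) hδ.le (by positivity)
      ((div_lt_one hp0).2 hp) hA hB).mono fun lam hlam => .intro hlam.1 (hbound lam hlam)
  obtain ⟨N, hN⟩ := hbdd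
  have hcompact : IsCompact D :=
    isCompact_Icc.of_isClosed_subset hclosed fun lam hlam => ⟨hlam.1, hN hlam⟩
  obtain ⟨lam₀, hlam₀, hmax⟩ := hcompact.exists_isGreatest ⟨0, h0⟩
  exact ⟨h0, hcompact, fun _ hlam => hlam.1, lam₀, hlam₀, fun _ hlam => hmax hlam⟩

theorem stmt_1 (n : ℕ) (M : Set (EuclideanSpace ℝ (Fin n)))
    (hMne : M.Nonempty) (hMcl : IsClosed M) (hMcv : Convex ℝ M)
    (q : EuclideanSpace ℝ (Fin n)) (hq : q ∉ M)
    (K : Set (EuclideanSpace ℝ (Fin n))) (hKcp : IsCompact K) (hKcv : Convex ℝ K)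
    (hK0 : (0 : EuclideanSpace ℝ (Fin n)) ∈ K)
    (a : ℝ) (ha : 0 ≤ a) (w : EuclideanSpace ℝ (Fin n)) (hw : w ∈ a • K)
    (δ : ℝ) (hδ : 0 < δ) (p : ℝ) (hp : 1 < p) :
    (0 : ℝ) ∈ resolvingSet n M K q w a δ p ∧
    IsCompact (resolvingSet n M K q w a δ p) ∧
    resolvingSet n M K q w a δ p ⊆ Set.Ici 0 ∧
    ∃ lam₀ ∈ resolvingSet n M K q w a δ p,
      ∀ lam ∈ resolvingSet n M K q w a δ p, lam ≤ lam₀ :=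
  stmt_1_general n M hMne hMcl hMcv q hq K hKcp a ha w hw δ hδ p hp
end

section
/- Let ξ, v ∈ ℝ^n with ξ ≠ 0, and let a ≥ 0 and e ≥ 0 be reals. Then { λ ∈ [0, ∞) : ‖a·v − λ·ξ‖ ≤ (a²‖v‖² + λe)^{1/2} } = [0, max{0, (e + 2a⟨v, ξ⟩)/‖ξ‖²}]. -/
/-!
Expanding the square, `‖a • v - λ • ξ‖² ≤ a²‖v‖² + λ e` is equivalent to
`λ² ‖ξ‖² ≤ λ (e + 2 a ⟪v, ξ⟫)`, and for `λ ≥ 0` this says `λ = 0` or `λ ‖ξ‖² ≤ e + 2 a ⟪v, ξ⟫`.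
-/

open Set RealInnerProductSpace

theorem norm_smul_sub_smul_sq {F : Type*} [NormedAddCommGroup F] [InnerProductSpace ℝ F]
    (a t : ℝ) (v ξ : F) :
    ‖a • v - t • ξ‖ ^ 2 = a ^ 2 * ‖v‖ ^ 2 - 2 * a * t * ⟪v, ξ⟫ + t ^ 2 * ‖ξ‖ ^ 2 := by
  rw [norm_sub_sq_real, norm_smul, norm_smul, inner_smul_left, inner_smul_right,
    Real.norm_eq_abs, Real.norm_eq_abs, mul_pow, mul_pow, sq_abs, sq_abs]
  simp only [conj_trivial]
  ring

theorem setOf_nonneg_sq_mul_le_mul_eq_Icc {K M : ℝ} (hK : 0 < K) :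
    {t : ℝ | 0 ≤ t ∧ t ^ 2 * K ≤ t * M} = Icc 0 (max 0 (M / K)) := by
  ext t
  simp only [mem_ofPred_eq, mem_Icc]
  refine and_congr_right fun ht => ?_
  rcases ht.eq_or_lt with rfl | ht
  · simp
  · rw [le_max_iff, le_div_iff₀ hK, sq, mul_assoc, mul_le_mul_iff_right₀ ht]
    simp [ht.not_ge]

theorem stmt_5_general (n : ℕ) (ξ v : EuclideanSpace ℝ (Fin n)) (hξ : ξ ≠ 0)
    (a e : ℝ) (he : 0 ≤ e) :
    {lam : ℝ | 0 ≤ lam ∧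
        ‖a • v - lam • ξ‖ ≤ Real.sqrt (a ^ 2 * ‖v‖ ^ 2 + lam * e)} =
      Set.Icc 0 (max 0 ((e + 2 * a * (inner ℝ v ξ : ℝ)) / ‖ξ‖ ^ 2)) := by
  rw [← setOf_nonneg_sq_mul_le_mul_eq_Icc (by positivity [norm_pos_iff.mpr hξ])]
  ext t
  simp only [mem_ofPred_eq]
  refine and_congr_right fun ht => ?_
  rw [Real.le_sqrt (norm_nonneg _) (by positivity), norm_smul_sub_smul_sq]
  constructor <;> intro h <;> linarith

theorem stmt_5 (n : ℕ) (ξ v : EuclideanSpace ℝ (Fin n)) (hξ : ξ ≠ 0)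
    (a e : ℝ) (ha : 0 ≤ a) (he : 0 ≤ e) :
    {lam : ℝ | 0 ≤ lam ∧
        ‖a • v - lam • ξ‖ ≤ Real.sqrt (a ^ 2 * ‖v‖ ^ 2 + lam * e)} =
      Set.Icc 0 (max 0 ((e + 2 * a * (inner ℝ v ξ : ℝ)) / ‖ξ‖ ^ 2)) :=
  stmt_5_general n ξ v hξ a e he
end

section
/- Let α, β, b, c > 0 and ρ > σ > 0 be reals with ρ² > σ²ν², where ν = (c/b)·max{α/β, 1}; set δ = ρ² − σ²ν², A(s) = (1 − e^{−αs})/α, B(s) = (1 − e^{−βs})/β. Let T > 0, t* ∈ [0, T], ξ ∈ ℝ^n with ξ ≠ 0, and let v : [0, T] → ℝ^n be measurable with ∫₀^T ‖v(τ)‖² dτ ≤ σ² and ∫₀^{t*} max{0, δ b² A(T−τ)² + 2 c B(T−τ)⟨v(τ), ξ⟩} dτ = ‖ξ‖². Define u(τ) = (c B(T−τ)/(b A(T−τ)))·v(τ) − λ*(τ)·ξ for τ ∈ [0, t*] and u(τ) = (c B(T−τ)/(b A(T−τ)))·v(τ) for τ ∈ (t*, T], where λ*(τ) = max{0, δ b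 A(T−τ) + 2 (c B(T−τ)/(b A(T−τ)))⟨v(τ), ξ⟩}/‖ξ‖². Then (i) ξ + ∫₀^T (b A(T−τ)·u(τ) − c B(T−τ)·v(τ)) dτ = 0, and (ii) ∫₀^T ‖u(τ)‖² dτ ≤ ρ². -/
/-!
On `[0, t*]` one has `b A λ* ‖ξ‖² = max 0 (δ b² A² + 2 c B ⟨v, ξ⟩)`, the integrand defining `t*`,
while `b A · (c B / (b A)) = c B`; so the pursuer's term cancels the evader's one and the
`ξ`-component integrates to exactly `-ξ`, which is (i). For (ii), `λ*` is the nonnegative root of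
`λ² ‖ξ‖² = λ (δ b A + 2 W ⟨v, ξ⟩)` with `W = c B / (b A)`, hence `‖u‖² = W² ‖v‖² + δ b A λ*` on
`[0, t*]`; integrating gives `∫ ‖u‖² = ∫ W² ‖v‖² + δ`, and `B ≤ max (α / β) 1 · A` bounds
`W` by `ν`, so `∫ ‖u‖² ≤ ν² σ² + δ = ρ²`. Since `W` is also bounded away from `0`, `‖v‖²` is
integrable as soon as `‖u‖²` is, and otherwise `∫ ‖u‖² = 0`.
-/

open Real Set MeasureTheory

noncomputable def expKernel (γ s : ℝ) : ℝ := (1 - exp (-γ * s)) / γ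

section ExpKernel

variable {α β γ s : ℝ}

lemma expKernel_nonneg (hγ : 0 < γ) (hs : 0 ≤ s) : 0 ≤ expKernel γ s := by
  have : exp (-γ * s) ≤ 1 := exp_le_one_iff.2 (by nlinarith)
  exact div_nonneg (by linarith) hγ.le

lemma expKernel_pos (hγ : 0 < γ) (hs : 0 < s) : 0 < expKernel γ s := by
  have : exp (-γ * s) < 1 := exp_lt_one_iff.2 (by nlinarith)
  exact div_pos (by linarith) hγ

lemma expKernel_anti {γ₁ γ₂ : ℝ} (h₁ : 0 < γ₁) (h₁₂ : γ₁ ≤ γ₂) (hs : 0 ≤ s) :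
    expKernel γ₂ s ≤ expKernel γ₁ s := by
  rcases hs.eq_or_lt with rfl | hs
  · simp [expKernel]
  have h₂ : 0 < γ₂ := h₁.trans_le h₁₂
  -- `expKernel γ s` is `s` times the slope of the convex function `exp` on `[-γ s, 0]`
  have key := convexOn_exp.secant_mono (mem_univ 0) (mem_univ (-γ₂ * s)) (mem_univ (-γ₁ * s))
    (by nlinarith) (by nlinarith) (by nlinarith)
  rw [exp_zero, sub_zero, sub_zero, ← neg_div_neg_eq, ← neg_div_neg_eq (exp _ - 1)] at key
  have e : ∀ γ, expKernel γ s = s * (-(exp (-γ * s) - 1) / -(-γ * s)) := fun γ => by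
    simp only [expKernel]; field_simp; ring
  rw [e, e]
  exact mul_le_mul_of_nonneg_left key hs.le

lemma expKernel_le_max_mul (hα : 0 < α) (hβ : 0 < β) (hs : 0 ≤ s) :
    expKernel β s ≤ max (α / β) 1 * expKernel α s := by
  rcases le_total α β with h | h
  · exact (expKernel_anti hα h hs).trans
      (le_mul_of_one_le_left (expKernel_nonneg hα hs) (le_max_right _ _))
  · calc expKernel β s ≤ (1 - exp (-α * s)) / β := by unfold expKernel; gcongr
      _ = α / β * expKernel α s := by unfold expKernel; field_simp
      _ ≤ _ := by gcongr; exacts [expKernel_nonneg hα hs, le_max_left _ _]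

lemma min_mul_le_expKernel (hα : 0 < α) (hβ : 0 < β) (hs : 0 ≤ s) :
    min (α / β) 1 * expKernel α s ≤ expKernel β s := by
  rcases le_total α β with h | h
  · calc min (α / β) 1 * expKernel α s ≤ α / β * expKernel α s := by
          gcongr; exacts [expKernel_nonneg hα hs, min_le_left _ _]
      _ = (1 - exp (-α * s)) / β := by unfold expKernel; field_simp
      _ ≤ _ := by unfold expKernel; gcongr
  · exact (mul_le_of_le_one_left (expKernel_nonneg hα hs) (min_le_right _ _)).trans
      (expKernel_anti hβ h hs)

variable {b c : ℝ}

lemma mul_expKernel_eq_zero_imp (hα : 0 < α) (hβ : 0 < β) (hb : 0 < b) (hs : 0 ≤ s)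
    (h : b * expKernel α s = 0) : c * expKernel β s = 0 := by
  have hA : expKernel α s = 0 := (mul_eq_zero.1 h).resolve_left hb.ne'
  have hB : expKernel β s = 0 := le_antisymm (by simpa [hA] using expKernel_le_max_mul hα hβ hs)
    (by simpa [hA] using min_mul_le_expKernel hα hβ hs)
  rw [hB, mul_zero]

lemma sq_mul_expKernel_div_le (hα : 0 < α) (hβ : 0 < β) (hb : 0 < b) (hc : 0 < c) (hs : 0 ≤ s) :
    (c * expKernel β s / (b * expKernel α s)) ^ 2 ≤ (c / b * max (α / β) 1) ^ 2 := by
  have hA := expKernel_nonneg hα hs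
  rw [mul_div_mul_comm]
  have hratio : expKernel β s / expKernel α s ≤ max (α / β) 1 :=
    div_le_of_le_mul₀ hA (by positivity) (expKernel_le_max_mul hα hβ hs)
  gcongr
  exact mul_nonneg (by positivity) (div_nonneg (expKernel_nonneg hβ hs) hA)

lemma le_mul_expKernel_div (hα : 0 < α) (hβ : 0 < β) (hb : 0 < b) (hc : 0 < c) (hs : 0 < s) :
    c / b * min (α / β) 1 ≤ c * expKernel β s / (b * expKernel α s) := by
  rw [mul_div_mul_comm]
  gcongr
  exact (le_div_iff₀ (expKernel_pos hα hs)).2 (min_mul_le_expKernel hα hβ hs.le)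

end ExpKernel

lemma intervalIntegral_ite_le {E : Type*} [NormedAddCommGroup E] [NormedSpace ℝ E] (f : ℝ → E)
    {a t b : ℝ} (hat : a ≤ t) (htb : t ≤ b) :
    ∫ τ in a..b, (if τ ≤ t then f τ else 0) = ∫ τ in a..t, f τ := by
  have : (fun τ => if τ ≤ t then f τ else 0) = (Iic t).indicator f := by
    ext τ; simp [indicator]
  rw [intervalIntegral.integral_of_le (hat.trans htb), intervalIntegral.integral_of_le hat, this,
    setIntegral_indicator measurableSet_Iic, Ioc_inter_Iic, inf_of_le_right htb]

lemma IntervalIntegrable.ite_le {E : Type*} [NormedAddCommGroup E] {f : ℝ → E}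
    {a t b : ℝ} (hf : IntervalIntegrable f volume a t) (hat : a ≤ t) (htb : t ≤ b) :
    IntervalIntegrable (fun τ => if τ ≤ t then f τ else 0) volume a b := by
  have : (fun τ => if τ ≤ t then f τ else 0) = (Iic t).indicator f := by
    ext τ; simp [indicator]
  rw [intervalIntegrable_iff_integrableOn_Ioc_of_le (hat.trans htb), this, IntegrableOn,
    integrable_indicator_iff measurableSet_Iic, IntegrableOn,
    Measure.restrict_restrict measurableSet_Iic, Iic_inter_Ioc_of_le htb, ← IntegrableOn,
    ← intervalIntegrable_iff_integrableOn_Ioc_of_le hat]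
  exact hf

lemma IntervalIntegrable.of_sq_mul {W f : ℝ → ℝ} {κ a b : ℝ} (hab : a ≤ b) (hκ : 0 < κ)
    (hW : ∀ τ ∈ Ioo a b, κ ≤ W τ) (hf : AEStronglyMeasurable f volume) (hf0 : ∀ τ, 0 ≤ f τ)
    (h : IntervalIntegrable (fun τ => W τ ^ 2 * f τ) volume a b) :
    IntervalIntegrable f volume a b := by
  rw [intervalIntegrable_iff_integrableOn_Ioc_of_le hab, integrableOn_Ioc_iff_integrableOn_Ioo]
    at h ⊢
  refine (h.const_mul (κ ^ 2)⁻¹).mono' hf.restrict ((ae_restrict_iff' measurableSet_Ioo).2 ?_)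
  refine Filter.Eventually.of_forall fun τ hτ => ?_
  rw [Real.norm_eq_abs, abs_of_nonneg (hf0 τ), inv_mul_eq_div, le_div_iff₀ (by positivity)]
  have : κ ^ 2 ≤ W τ ^ 2 := pow_le_pow_left₀ hκ.le (hW τ hτ) 2
  nlinarith [hf0 τ]

lemma intervalIntegral_sq_mul_le {W f : ℝ → ℝ} {κ K a b : ℝ} (hab : a ≤ b) (hκ : 0 < κ)
    (hWκ : ∀ τ ∈ Ioo a b, κ ≤ W τ) (hWK : ∀ τ ∈ Icc a b, W τ ^ 2 ≤ K)
    (hf : AEStronglyMeasurable f volume) (hf0 : ∀ τ, 0 ≤ f τ)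
    (h : IntervalIntegrable (fun τ => W τ ^ 2 * f τ) volume a b) :
    ∫ τ in a..b, W τ ^ 2 * f τ ≤ K * ∫ τ in a..b, f τ := by
  rw [← intervalIntegral.integral_const_mul]
  exact intervalIntegral.integral_mono_on hab h ((h.of_sq_mul hab hκ hWκ hf hf0).const_mul K)
    fun τ hτ => mul_le_mul_of_nonneg_right (hWK τ hτ) (hf0 τ)

section ResolvingControl

variable {E : Type*} [NormedAddCommGroup E] [InnerProductSpace ℝ E]

lemma norm_smul_sub_max_div_smul_sq (W D : ℝ) (v : E) {ξ : E} (hξ : ξ ≠ 0) :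
    ‖W • v - (max 0 (D + 2 * W * inner ℝ v ξ) / ‖ξ‖ ^ 2) • ξ‖ ^ 2 =
      W ^ 2 * ‖v‖ ^ 2 + D * (max 0 (D + 2 * W * inner ℝ v ξ) / ‖ξ‖ ^ 2) := by
  set l := max 0 (D + 2 * W * inner ℝ v ξ) / ‖ξ‖ ^ 2
  have hl : l * ‖ξ‖ ^ 2 = max 0 (D + 2 * W * inner ℝ v ξ) :=
    div_mul_cancel₀ _ (by positivity)
  rw [norm_sub_sq_real, norm_smul, norm_smul, mul_pow, mul_pow, Real.norm_eq_abs,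
    Real.norm_eq_abs, sq_abs, sq_abs, real_inner_smul_left, real_inner_smul_right]
  rcases le_total (D + 2 * W * inner ℝ v ξ) 0 with hX | hX
  · have hl0 : l = 0 := by simp [l, max_eq_left hX]
    rw [hl0]; ring
  · rw [max_eq_right hX] at hl
    linear_combination l * hl

lemma mul_max_zero_mul_add_div {a w δ p : ℝ} (ha : 0 ≤ a) (hw : a = 0 → w = 0) :
    a * max 0 (δ * a + 2 * (w / a) * p) = max 0 (δ * a ^ 2 + 2 * w * p) := by
  rw [mul_max_of_nonneg _ _ ha, mul_zero]
  rcases eq_or_ne a 0 with h | h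
  · simp [h, hw h]
  · congr 1; field_simp

variable {ξ : E} {v u : ℝ → E} {a w lam : ℝ → ℝ} {δ t T : ℝ}

lemma integral_mul_resolving_eq_one (hξ : ξ ≠ 0) (ht : 0 ≤ t)
    (ha : ∀ τ ∈ Icc 0 t, 0 ≤ a τ) (hw : ∀ τ ∈ Icc 0 t, a τ = 0 → w τ = 0)
    (hlam : ∀ τ, lam τ = max 0 (δ * a τ + 2 * (w τ / a τ) * inner ℝ (v τ) ξ) / ‖ξ‖ ^ 2)
    (hroot : ∫ τ in 0..t, max 0 (δ * a τ ^ 2 + 2 * w τ * inner ℝ (v τ) ξ) = ‖ξ‖ ^ 2) :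
    ∫ τ in 0..t, a τ * lam τ = 1 := by
  have h : EqOn (fun τ => a τ * lam τ)
      (fun τ => max 0 (δ * a τ ^ 2 + 2 * w τ * inner ℝ (v τ) ξ) / ‖ξ‖ ^ 2) (uIcc 0 t) := by
    intro τ hτ
    rw [uIcc_of_le ht] at hτ
    dsimp only
    rw [hlam, ← mul_div_assoc, mul_max_zero_mul_add_div (ha τ hτ) (hw τ hτ)]
  rw [intervalIntegral.integral_congr h, intervalIntegral.integral_div, hroot,
    div_self (by positivity)]

theorem add_integral_resolving_eq_zero [CompleteSpace E] (hξ : ξ ≠ 0) (ht : t ∈ Icc 0 T)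
    (ha : ∀ τ ∈ Icc 0 T, 0 ≤ a τ)
    -- at the terminal instant both weights vanish and `w / a = 0 / 0 = 0`
    (hw : ∀ τ ∈ Icc 0 T, a τ = 0 → w τ = 0)
    (hlam : ∀ τ, lam τ = max 0 (δ * a τ + 2 * (w τ / a τ) * inner ℝ (v τ) ξ) / ‖ξ‖ ^ 2)
    (hu : ∀ τ, u τ = if τ ≤ t then (w τ / a τ) • v τ - lam τ • ξ else (w τ / a τ) • v τ)
    (hroot : ∫ τ in 0..t, max 0 (δ * a τ ^ 2 + 2 * w τ * inner ℝ (v τ) ξ) = ‖ξ‖ ^ 2) :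
    ξ + ∫ τ in 0..T, (a τ • u τ - w τ • v τ) = 0 := by
  have hsub : Icc 0 t ⊆ Icc 0 T := Icc_subset_Icc_right ht.2
  have hsteer : EqOn (fun τ => a τ • u τ - w τ • v τ)
      (fun τ => if τ ≤ t then (-(a τ * lam τ)) • ξ else 0) (uIcc 0 T) := by
    intro τ hτ
    rw [uIcc_of_le (ht.1.trans ht.2)] at hτ
    have hcancel : a τ * (w τ / a τ) = w τ := mul_div_cancel_of_imp' (hw τ hτ)
    simp only [hu]
    split_ifs
    · rw [smul_sub, smul_smul, smul_smul, hcancel, neg_smul]; abel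
    · rw [smul_smul, hcancel, sub_self]
  rw [intervalIntegral.integral_congr hsteer, intervalIntegral_ite_le _ ht.1 ht.2,
    intervalIntegral.integral_smul_const, intervalIntegral.integral_neg,
    integral_mul_resolving_eq_one hξ ht.1 (fun τ hτ => ha τ (hsub hτ))
      (fun τ hτ => hw τ (hsub hτ)) hlam hroot, neg_one_smul, add_neg_cancel]

theorem integral_norm_resolving_sq (hξ : ξ ≠ 0) (ht : t ∈ Icc 0 T)
    (ha : ∀ τ ∈ Icc 0 T, 0 ≤ a τ) (hw : ∀ τ ∈ Icc 0 T, a τ = 0 → w τ = 0)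
    (hlam : ∀ τ, lam τ = max 0 (δ * a τ + 2 * (w τ / a τ) * inner ℝ (v τ) ξ) / ‖ξ‖ ^ 2)
    (hu : ∀ τ, u τ = if τ ≤ t then (w τ / a τ) • v τ - lam τ • ξ else (w τ / a τ) • v τ)
    (hroot : ∫ τ in 0..t, max 0 (δ * a τ ^ 2 + 2 * w τ * inner ℝ (v τ) ξ) = ‖ξ‖ ^ 2)
    (hu_int : IntervalIntegrable (fun τ => ‖u τ‖ ^ 2) volume 0 T) :
    IntervalIntegrable (fun τ => (w τ / a τ) ^ 2 * ‖v τ‖ ^ 2) volume 0 T ∧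
      ∫ τ in 0..T, ‖u τ‖ ^ 2 = (∫ τ in 0..T, (w τ / a τ) ^ 2 * ‖v τ‖ ^ 2) + δ := by
  have hsub : Icc 0 t ⊆ Icc 0 T := Icc_subset_Icc_right ht.2
  have hone := integral_mul_resolving_eq_one hξ ht.1 (fun τ hτ => ha τ (hsub hτ))
    (fun τ hτ => hw τ (hsub hτ)) hlam hroot
  have hψ : IntervalIntegrable (fun τ => if τ ≤ t then δ * (a τ * lam τ) else 0) volume 0 T :=
    ((intervalIntegral.intervalIntegrable_of_integral_ne_zero
      (by rw [hone]; exact one_ne_zero)).const_mul δ).ite_le ht.1 ht.2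
  have henergy : ∀ τ, ‖u τ‖ ^ 2 =
      (w τ / a τ) ^ 2 * ‖v τ‖ ^ 2 + if τ ≤ t then δ * (a τ * lam τ) else 0 := by
    intro τ
    rw [hu]
    split_ifs
    · rw [hlam, norm_smul_sub_max_div_smul_sq _ _ _ hξ, mul_assoc]
    · rw [norm_smul, mul_pow, Real.norm_eq_abs, sq_abs, add_zero]
  have hWv : IntervalIntegrable (fun τ => (w τ / a τ) ^ 2 * ‖v τ‖ ^ 2) volume 0 T := by
    convert hu_int.sub hψ using 1
    ext τ; rw [henergy]; ring
  refine ⟨hWv, ?_⟩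
  simp only [henergy]
  rw [intervalIntegral.integral_add hWv hψ, intervalIntegral_ite_le _ ht.1 ht.2,
    intervalIntegral.integral_const_mul, hone, mul_one]

end ResolvingControl

theorem stmt_9_general (n : ℕ) (α β b c ρ σ : ℝ)
    (hα : 0 < α) (hβ : 0 < β) (hb : 0 < b) (hc : 0 < c)
    (δ : ℝ) (hδ : δ = ρ ^ 2 - σ ^ 2 * ((c / b) * max (α / β) 1) ^ 2)
    (A B : ℝ → ℝ)
    (hA : ∀ s, A s = (1 - Real.exp (-α * s)) / α)
    (hB : ∀ s, B s = (1 - Real.exp (-β * s)) / β)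
    (T : ℝ) (tstar : ℝ) (htstar : tstar ∈ Set.Icc (0 : ℝ) T)
    (ξ : EuclideanSpace ℝ (Fin n)) (hξ : ξ ≠ 0)
    (v : ℝ → EuclideanSpace ℝ (Fin n)) (hv : Measurable v)
    (hvint : (∫ τ in (0:ℝ)..T, ‖v τ‖ ^ 2) ≤ σ ^ 2)
    (hroot : (∫ τ in (0:ℝ)..tstar,
        max 0 (δ * b ^ 2 * (A (T - τ)) ^ 2 +
          2 * c * B (T - τ) * (inner ℝ (v τ) ξ : ℝ))) = ‖ξ‖ ^ 2)
    (lamstar : ℝ → ℝ)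
    (hlamstar : ∀ τ, lamstar τ =
      max 0 (δ * b * A (T - τ) +
        2 * (c * B (T - τ) / (b * A (T - τ))) * (inner ℝ (v τ) ξ : ℝ)) / ‖ξ‖ ^ 2)
    (u : ℝ → EuclideanSpace ℝ (Fin n))
    (hu : ∀ τ, u τ = if τ ≤ tstar then
        (c * B (T - τ) / (b * A (T - τ))) • v τ - lamstar τ • ξ
      else (c * B (T - τ) / (b * A (T - τ))) • v τ) :
    ξ + (∫ τ in (0:ℝ)..T, ((b * A (T - τ)) • u τ - (c * B (T - τ)) • v τ)) = 0 ∧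
    (∫ τ in (0:ℝ)..T, ‖u τ‖ ^ 2) ≤ ρ ^ 2 := by
  obtain rfl : A = expKernel α := funext hA
  obtain rfl : B = expKernel β := funext hB
  have hs : ∀ τ ∈ Icc 0 T, 0 ≤ T - τ := fun τ hτ => sub_nonneg.2 hτ.2
  have ha : ∀ τ ∈ Icc 0 T, 0 ≤ b * expKernel α (T - τ) := fun τ hτ =>
    mul_nonneg hb.le (expKernel_nonneg hα (hs τ hτ))
  have hw : ∀ τ ∈ Icc 0 T, b * expKernel α (T - τ) = 0 → c * expKernel β (T - τ) = 0 :=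
    fun τ hτ => mul_expKernel_eq_zero_imp hα hβ hb (hs τ hτ)
  have hlam : ∀ τ, lamstar τ = max 0 (δ * (b * expKernel α (T - τ)) + 2 * (c * expKernel β (T - τ)
      / (b * expKernel α (T - τ))) * inner ℝ (v τ) ξ) / ‖ξ‖ ^ 2 := fun τ => by
    rw [hlamstar, mul_assoc]
  have hroot' : ∫ τ in 0..tstar, max 0 (δ * (b * expKernel α (T - τ)) ^ 2 +
      2 * (c * expKernel β (T - τ)) * inner ℝ (v τ) ξ) = ‖ξ‖ ^ 2 := by
    rw [← hroot]; simp only [mul_pow, mul_assoc]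
  refine ⟨add_integral_resolving_eq_zero hξ htstar ha hw hlam hu hroot', ?_⟩
  by_cases hu_int : IntervalIntegrable (fun τ => ‖u τ‖ ^ 2) volume 0 T
  swap
  · rw [intervalIntegral.integral_undef hu_int]; positivity
  obtain ⟨hWv, hu_eq⟩ := integral_norm_resolving_sq hξ htstar ha hw hlam hu hroot' hu_int
  calc ∫ τ in 0..T, ‖u τ‖ ^ 2
      = (∫ τ in 0..T, (c * expKernel β (T - τ) / (b * expKernel α (T - τ))) ^ 2 * ‖v τ‖ ^ 2)
          + δ := hu_eq
    _ ≤ (c / b * max (α / β) 1) ^ 2 * (∫ τ in 0..T, ‖v τ‖ ^ 2) + δ := by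
      gcongr
      exact intervalIntegral_sq_mul_le (htstar.1.trans htstar.2) (by positivity)
        (fun τ hτ => le_mul_expKernel_div hα hβ hb hc (sub_pos.2 hτ.2))
        (fun τ hτ => sq_mul_expKernel_div_le hα hβ hb hc (hs τ hτ))
        (hv.norm.pow_const 2).aestronglyMeasurable (fun τ => by positivity) hWv
    _ ≤ (c / b * max (α / β) 1) ^ 2 * σ ^ 2 + δ := by gcongr
    _ = ρ ^ 2 := by rw [hδ]; ring

theorem stmt_9 (n : ℕ) (α β b c ρ σ : ℝ)
    (hα : 0 < α) (hβ : 0 < β) (hb : 0 < b) (hc : 0 < c)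
    (hσ : 0 < σ) (hρσ : σ < ρ)
    (hν : ρ ^ 2 > σ ^ 2 * ((c / b) * max (α / β) 1) ^ 2)
    (δ : ℝ) (hδ : δ = ρ ^ 2 - σ ^ 2 * ((c / b) * max (α / β) 1) ^ 2)
    (A B : ℝ → ℝ)
    (hA : ∀ s, A s = (1 - Real.exp (-α * s)) / α)
    (hB : ∀ s, B s = (1 - Real.exp (-β * s)) / β)
    (T : ℝ) (hT : 0 < T) (tstar : ℝ) (htstar : tstar ∈ Set.Icc (0 : ℝ) T)
    (ξ : EuclideanSpace ℝ (Fin n)) (hξ : ξ ≠ 0)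
    (v : ℝ → EuclideanSpace ℝ (Fin n)) (hv : Measurable v)
    (hvint : (∫ τ in (0:ℝ)..T, ‖v τ‖ ^ 2) ≤ σ ^ 2)
    (hroot : (∫ τ in (0:ℝ)..tstar,
        max 0 (δ * b ^ 2 * (A (T - τ)) ^ 2 +
          2 * c * B (T - τ) * (inner ℝ (v τ) ξ : ℝ))) = ‖ξ‖ ^ 2)
    (lamstar : ℝ → ℝ)
    (hlamstar : ∀ τ, lamstar τ =
      max 0 (δ * b * A (T - τ) +
        2 * (c * B (T - τ) / (b * A (T - τ))) * (inner ℝ (v τ) ξ : ℝ)) / ‖ξ‖ ^ 2)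
    (u : ℝ → EuclideanSpace ℝ (Fin n))
    (hu : ∀ τ, u τ = if τ ≤ tstar then
        (c * B (T - τ) / (b * A (T - τ))) • v τ - lamstar τ • ξ
      else (c * B (T - τ) / (b * A (T - τ))) • v τ) :
    ξ + (∫ τ in (0:ℝ)..T, ((b * A (T - τ)) • u τ - (c * B (T - τ)) • v τ)) = 0 ∧
    (∫ τ in (0:ℝ)..T, ‖u τ‖ ^ 2) ≤ ρ ^ 2 :=
  stmt_9_general n α β b c ρ σ hα hβ hb hc δ hδ A B hA hB T tstar htstar ξ hξ v hv hvint hroot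
    lamstar hlamstar u hu
end

section
/- Fix l ≥ 0, σ ≥ 0 and ρ > σ, and set δ = ρ² − σ². Fix z₀ ∈ ℝⁿ with ‖z₀‖ > l and set h = ‖z₀‖² − l² > 0. Then for every v ∈ ℝⁿ, { λ ∈ [0, ∞) : λ l + (‖v‖² + λδ)^{1/2} ≥ ‖v − λ·z₀‖ } = [0, max{0, λ*(v)}], where λ*(v) = (h(δ + 2⟨v, z₀⟩) + 2l²δ + 2l‖δ·z₀ + h·v‖)/h². -/
/-!
For `λ > 0`, squaring turns `‖v - λ z₀‖ ≤ λ l + √(‖v‖² + λ δ)` into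
`λ h - c ≤ 2 l √(‖v‖² + λ δ)` with `c = δ + 2 ⟪v, z₀⟫`. This holds trivially when `λ h ≤ c`;
otherwise squaring once more gives a quadratic inequality in `λ` whose discriminant is the
perfect square `(2 l ‖δ z₀ + h v‖)²`, with roots `(h c + 2 l² δ ± 2 l ‖δ z₀ + h v‖) / h²`.
The smaller root never exceeds `max 0 (c / h)` (this is where `l < ‖z₀‖` enters), so the
solution set is cut off only by the larger root `λ*`.
-/

section Scalar

variable {a b l δ h p w t s : ℝ}

theorem resolving_sq_identity (hh : h = b ^ 2 - l ^ 2)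
    (hw : w ^ 2 = δ ^ 2 * b ^ 2 + 2 * δ * h * p + h ^ 2 * a ^ 2) :
    (t * h ^ 2 - (h * (δ + 2 * p) + 2 * l ^ 2 * δ)) ^ 2 =
      h ^ 2 * ((t * h - (δ + 2 * p)) ^ 2 - (2 * l) ^ 2 * (a ^ 2 + t * δ)) + (2 * l * w) ^ 2 := by
  subst hh
  linear_combination (-4 * l ^ 2) * hw

theorem neg_le_two_mul_of_neg_of_pos (hl : 0 ≤ l) (hδ : 0 ≤ δ) (hb : l < b)
    (hh : h = b ^ 2 - l ^ 2) (ha : 0 ≤ a) (hp : -(a * b) ≤ p) (hc : δ + 2 * p < 0)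
    (hK : 0 < h * (δ + 2 * p) + 2 * l ^ 2 * δ) :
    -(δ + 2 * p) ≤ 2 * l * a := by
  have hh0 : 0 < h := by nlinarith
  -- otherwise `h a < l δ < 2 a l (b - l)`, i.e. `b + l < 2 l`
  by_contra! hlt
  have hl0 : 0 < l := by
    rcases hl.lt_or_eq with hl0 | rfl
    · exact hl0
    · nlinarith [mul_pos hh0 (neg_pos.2 hc)]
  have hha : h * a < l * δ := by nlinarith
  have hδa : δ < 2 * a * (b - l) := by nlinarith
  have ha0 : 0 < a := by nlinarith
  nlinarith [mul_pos ha0 (sub_pos.2 hb)]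

theorem resolving_lower_root_le (hl : 0 ≤ l) (hδ : 0 ≤ δ) (hb : l < b)
    (hh : h = b ^ 2 - l ^ 2) (ha : 0 ≤ a) (hp : -(a * b) ≤ p) (hw0 : 0 ≤ w)
    (hw : w ^ 2 = δ ^ 2 * b ^ 2 + 2 * δ * h * p + h ^ 2 * a ^ 2) (ht : 0 ≤ t)
    (htc : δ + 2 * p < t * h) :
    h * (δ + 2 * p) + 2 * l ^ 2 * δ - 2 * l * w ≤ t * h ^ 2 := by
  have hh0 : 0 < h := by nlinarith
  rcases le_or_gt 0 (δ + 2 * p) with hc | hc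
  · have hlδw : l * δ ≤ w := by
      rw [← sq_le_sq₀ (by positivity) hw0]
      nlinarith [mul_nonneg (mul_nonneg hh0.le hδ) hc, sq_nonneg (h * a)]
    nlinarith [mul_le_mul_of_nonneg_left hlδw hl]
  · suffices h * (δ + 2 * p) + 2 * l ^ 2 * δ ≤ 2 * l * w by nlinarith
    rcases le_or_gt (h * (δ + 2 * p) + 2 * l ^ 2 * δ) 0 with hK | hK
    · nlinarith [mul_nonneg hl hw0]
    have hca := neg_le_two_mul_of_neg_of_pos hl hδ hb hh ha hp hc hK
    have hc2 : (δ + 2 * p) ^ 2 ≤ (2 * l * a) ^ 2 :=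
      sq_le_sq' (by linarith) (by nlinarith [mul_nonneg hl ha])
    have hid := resolving_sq_identity (t := 0) (a := a) hh hw
    rw [← sq_le_sq₀ hK.le (by positivity)]
    nlinarith [mul_le_mul_of_nonneg_left hc2 (sq_nonneg h)]

theorem sub_le_two_mul_iff (hl : 0 ≤ l) (hδ : 0 ≤ δ) (hb : l < b)
    (hh : h = b ^ 2 - l ^ 2) (ha : 0 ≤ a) (hp : -(a * b) ≤ p) (hw0 : 0 ≤ w)
    (hw : w ^ 2 = δ ^ 2 * b ^ 2 + 2 * δ * h * p + h ^ 2 * a ^ 2) (ht : 0 ≤ t)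
    (hs0 : 0 ≤ s) (hs : s ^ 2 = a ^ 2 + t * δ) :
    t * h - (δ + 2 * p) ≤ 2 * l * s ↔
      t * h ^ 2 ≤ h * (δ + 2 * p) + 2 * l ^ 2 * δ + 2 * l * w := by
  have hh0 : 0 < h := by nlinarith
  rcases le_or_gt (t * h) (δ + 2 * p) with htc | htc
  · have : t * h ^ 2 ≤ h * (δ + 2 * p) := by nlinarith
    exact iff_of_true (by nlinarith [mul_nonneg hl hs0])
      (by nlinarith [mul_nonneg hl hw0, mul_nonneg (sq_nonneg l) hδ])
  have hlow := resolving_lower_root_le hl hδ hb hh ha hp hw0 hw ht htc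
  have hid := resolving_sq_identity (t := t) hh hw
  have hlw : 0 ≤ 2 * l * w := by positivity
  calc t * h - (δ + 2 * p) ≤ 2 * l * s
      ↔ (t * h - (δ + 2 * p)) ^ 2 ≤ (2 * l) ^ 2 * (a ^ 2 + t * δ) := by
        rw [← sq_le_sq₀ (by linarith) (by positivity), mul_pow, hs]
    _ ↔ (t * h ^ 2 - (h * (δ + 2 * p) + 2 * l ^ 2 * δ)) ^ 2 ≤ (2 * l * w) ^ 2 := by
        rw [hid, add_le_iff_nonpos_left, ← neg_nonneg, ← mul_neg,
          mul_nonneg_iff_of_pos_left (by positivity), neg_nonneg, sub_nonpos]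
    _ ↔ t * h ^ 2 - (h * (δ + 2 * p) + 2 * l ^ 2 * δ) ≤ 2 * l * w :=
        ⟨fun h2 => (abs_le_of_sq_le_sq' h2 hlw).2, sq_le_sq' (by linarith)⟩
    _ ↔ t * h ^ 2 ≤ h * (δ + 2 * p) + 2 * l ^ 2 * δ + 2 * l * w := sub_le_iff_le_add'

theorem le_mul_add_iff_le_max {N : ℝ} (hl : 0 ≤ l) (hδ : 0 ≤ δ) (hb : l < b)
    (hh : h = b ^ 2 - l ^ 2) (ha : 0 ≤ a) (hp : -(a * b) ≤ p) (hw0 : 0 ≤ w)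
    (hw : w ^ 2 = δ ^ 2 * b ^ 2 + 2 * δ * h * p + h ^ 2 * a ^ 2) (ht : 0 ≤ t)
    (hs0 : 0 ≤ s) (hs : s ^ 2 = a ^ 2 + t * δ)
    (hN0 : 0 ≤ N) (hN : N ^ 2 = a ^ 2 - 2 * t * p + t ^ 2 * b ^ 2) :
    N ≤ t * l + s ↔
      t ≤ max 0 ((h * (δ + 2 * p) + 2 * l ^ 2 * δ + 2 * l * w) / h ^ 2) := by
  have hh0 : 0 < h := by nlinarith
  have hsq : (t * l + s) ^ 2 - N ^ 2 = t * (2 * l * s) - t * (t * h - (δ + 2 * p)) := by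
    rw [hN, hh]
    linear_combination hs
  rw [← sq_le_sq₀ hN0 (by positivity), ← sub_nonneg, hsq, sub_nonneg]
  rcases ht.eq_or_lt with rfl | ht0
  · simp
  rw [mul_le_mul_iff_right₀ ht0, sub_le_two_mul_iff hl hδ hb hh ha hp hw0 hw ht hs0 hs,
    le_max_iff, le_div_iff₀ (by positivity), or_iff_right ht0.not_ge]

end Scalar

theorem norm_sub_smul_le_iff_le_max {E : Type*} [NormedAddCommGroup E] [InnerProductSpace ℝ E]
    {l δ h t : ℝ} {z v : E} (hl : 0 ≤ l) (hδ : 0 ≤ δ) (hz : l < ‖z‖) (hh : h = ‖z‖ ^ 2 - l ^ 2)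
    (ht : 0 ≤ t) :
    ‖v - t • z‖ ≤ t * l + √(‖v‖ ^ 2 + t * δ) ↔
      t ≤ max 0 ((h * (δ + 2 * inner ℝ v z) + 2 * l ^ 2 * δ + 2 * l * ‖δ • z + h • v‖) / h ^ 2) := by
  refine le_mul_add_iff_le_max hl hδ hz hh (norm_nonneg v)
    (neg_le_of_abs_le (abs_real_inner_le_norm v z)) (norm_nonneg _) ?_ ht (Real.sqrt_nonneg _)
    (Real.sq_sqrt (by positivity)) (norm_nonneg _) ?_
  · rw [norm_add_sq_real, real_inner_smul_left, real_inner_smul_right, norm_smul, norm_smul,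
      mul_pow, mul_pow, Real.norm_eq_abs, Real.norm_eq_abs, sq_abs, sq_abs, real_inner_comm z v]
    ring
  · rw [norm_sub_sq_real, real_inner_smul_right, norm_smul, mul_pow, Real.norm_eq_abs, sq_abs]
    ring

theorem stmt_10 (n : ℕ) (l σ ρ : ℝ) (hl : 0 ≤ l) (hσ : 0 ≤ σ) (hρσ : σ < ρ)
    (δ : ℝ) (hδ : δ = ρ ^ 2 - σ ^ 2)
    (z₀ : EuclideanSpace ℝ (Fin n)) (hz₀ : l < ‖z₀‖)
    (h : ℝ) (hh : h = ‖z₀‖ ^ 2 - l ^ 2)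
    (v : EuclideanSpace ℝ (Fin n)) :
    {lam : ℝ | 0 ≤ lam ∧ ‖v - lam • z₀‖ ≤ lam * l + Real.sqrt (‖v‖ ^ 2 + lam * δ)} =
      Set.Icc 0 (max 0
        ((h * (δ + 2 * (inner ℝ v z₀ : ℝ)) + 2 * l ^ 2 * δ +
          2 * l * ‖δ • z₀ + h • v‖) / h ^ 2)) := by
  have hδ0 : 0 ≤ δ := by rw [hδ]; nlinarith
  ext lam
  exact and_congr_right fun hlam => norm_sub_smul_le_iff_le_max hl hδ0 hz₀ hh hlam
end

section
/- Fix l ≥ 0, σ ≥ 0 and ρ > σ, and set δ = ρ² − σ². Fix z₀ ∈ ℝⁿ with ‖z₀‖ > l and set h = ‖z₀‖² − l² > 0. For v ∈ ℝⁿ let λ*(v) = (h(δ + 2⟨v, z₀⟩) + 2l²δ + 2l‖δ·z₀ + h·v‖)/h² and λ(v) = max{0, λ*(v)}. Then for every v ∈ ℝⁿ: λ(v) > 0 if and only if δ + 2⟨v, z₀⟩ + 2l‖v‖ > 0. -/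
/-!
Write `A = h(δ + 2⟨v, z₀⟩) + 2l²δ` and `B = δ + 2⟨v, z₀⟩`, so that `λ*(v) > 0` means
`A + 2l‖δz₀ + hv‖ > 0` and the claim is `B + 2l‖v‖ > 0`. For `y ≥ 0`, `x + y > 0` holds iff
`x > 0` or `x² < y²`. Since `‖z₀‖² = h + l²`, expanding `‖δz₀ + hv‖²` gives
`A² - (2l‖δz₀ + hv‖)² = h²(B² - (2l‖v‖)²)`, so the square conditions agree. Finally `B > 0`
forces `A > 0`, and conversely `A > 0` forces `B + 2l‖v‖ > 0` by Cauchy–Schwarz.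
-/

open scoped RealInnerProductSpace

lemma add_pos_iff_pos_or_sq_lt_sq {x y : ℝ} (hy : 0 ≤ y) : 0 < x + y ↔ 0 < x ∨ x ^ 2 < y ^ 2 := by
  constructor
  · intro hxy
    by_cases hx : 0 < x
    · exact Or.inl hx
    · exact Or.inr (by nlinarith)
  · rintro (hx | hxy)
    · linarith
    · linarith [(abs_lt_of_sq_lt_sq' hxy hy).1]

section InnerProductSpace

variable {E : Type*} [NormedAddCommGroup E] [InnerProductSpace ℝ E]

lemma norm_smul_add_smul_sq (δ h : ℝ) (z v : E) :
    ‖δ • z + h • v‖ ^ 2 = δ ^ 2 * ‖z‖ ^ 2 + 2 * δ * h * ⟪v, z⟫ + h ^ 2 * ‖v‖ ^ 2 := by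
  rw [norm_add_sq_real, real_inner_smul_left, real_inner_smul_right, real_inner_comm z v,
    norm_smul, norm_smul, Real.norm_eq_abs, Real.norm_eq_abs, mul_pow, mul_pow, sq_abs, sq_abs]
  ring

lemma resolving_sq_sub_sq_eq {l δ h : ℝ} {z : E} (hh : h = ‖z‖ ^ 2 - l ^ 2) (v : E) :
    (h * (δ + 2 * ⟪v, z⟫) + 2 * l ^ 2 * δ) ^ 2 - (2 * l * ‖δ • z + h • v‖) ^ 2 =
      h ^ 2 * ((δ + 2 * ⟪v, z⟫) ^ 2 - (2 * l * ‖v‖) ^ 2) := by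
  have hz : ‖z‖ ^ 2 = h + l ^ 2 := by rw [hh]; ring
  rw [mul_pow _ ‖δ • z + h • v‖, norm_smul_add_smul_sq, hz]
  ring

lemma add_mul_norm_pos_of_resolving_pos {l δ h : ℝ} {z : E} (hl : 0 ≤ l) (hlz : l ≤ ‖z‖)
    (hh : h = ‖z‖ ^ 2 - l ^ 2) {v : E} (hA : 0 < h * (δ + 2 * ⟪v, z⟫) + 2 * l ^ 2 * δ) :
    0 < δ + 2 * ⟪v, z⟫ + 2 * l * ‖v‖ := by
  by_contra! hB
  have hcs : -⟪v, z⟫ ≤ ‖v‖ * ‖z‖ := (neg_le_abs _).trans (abs_real_inner_le_norm v z)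
  have hδ : δ ≤ 2 * ‖v‖ * (‖z‖ - l) := by linarith
  have hh0 : 0 ≤ h := by rw [hh]; nlinarith
  have hlv : 0 ≤ l * ‖v‖ := mul_nonneg hl (norm_nonneg v)
  -- `A ≤ -2lh‖v‖ + 4l²‖v‖(‖z‖ - l) = -2l‖v‖(‖z‖ - l)²`
  have hA_le : h * (δ + 2 * ⟪v, z⟫) + 2 * l ^ 2 * δ ≤ -2 * (l * ‖v‖) * (‖z‖ - l) ^ 2 := by
    have h1 : h * (δ + 2 * ⟪v, z⟫) ≤ h * (-2 * l * ‖v‖) := by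
      apply mul_le_mul_of_nonneg_left _ hh0; linarith
    have h2 : l ^ 2 * δ ≤ l ^ 2 * (2 * ‖v‖ * (‖z‖ - l)) := mul_le_mul_of_nonneg_left hδ (sq_nonneg l)
    rw [hh] at h1
    nlinarith
  nlinarith [mul_nonneg hlv (sq_nonneg (‖z‖ - l))]

end InnerProductSpace

theorem stmt_11 (n : ℕ) (l σ ρ : ℝ) (hl : 0 ≤ l) (hσ : 0 ≤ σ) (hρσ : σ < ρ)
    (δ : ℝ) (hδ : δ = ρ ^ 2 - σ ^ 2)
    (z₀ : EuclideanSpace ℝ (Fin n)) (hz₀ : l < ‖z₀‖)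
    (h : ℝ) (hh : h = ‖z₀‖ ^ 2 - l ^ 2)
    (v : EuclideanSpace ℝ (Fin n)) :
    0 < max 0 ((h * (δ + 2 * (inner ℝ v z₀ : ℝ)) + 2 * l ^ 2 * δ +
        2 * l * ‖δ • z₀ + h • v‖) / h ^ 2) ↔
      0 < δ + 2 * (inner ℝ v z₀ : ℝ) + 2 * l * ‖v‖ := by
  have hδ0 : 0 ≤ δ := by rw [hδ]; nlinarith
  have hh0 : 0 < h := by rw [hh]; nlinarith
  have hsq : (h * (δ + 2 * ⟪v, z₀⟫) + 2 * l ^ 2 * δ) ^ 2 < (2 * l * ‖δ • z₀ + h • v‖) ^ 2 ↔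
      (δ + 2 * ⟪v, z₀⟫) ^ 2 < (2 * l * ‖v‖) ^ 2 := by
    rw [← sub_neg, resolving_sq_sub_sq_eq hh, ← smul_eq_mul, smul_neg_iff_of_pos_left (by positivity), sub_neg]
  have hw : 0 ≤ 2 * l * ‖δ • z₀ + h • v‖ := by positivity
  have hv : 0 ≤ 2 * l * ‖v‖ := by positivity
  rw [lt_max_iff, lt_self_iff_false, false_or, div_pos_iff_of_pos_right (by positivity),
    add_pos_iff_pos_or_sq_lt_sq hw, add_pos_iff_pos_or_sq_lt_sq hv, hsq]
  constructor
  · rintro (hA | hS)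
    · exact (add_pos_iff_pos_or_sq_lt_sq hv).1 (add_mul_norm_pos_of_resolving_pos hl hz₀.le hh hA)
    · exact Or.inr hS
  · rintro (hB | hS)
    · exact Or.inl (by positivity)
    · exact Or.inr hS
end

section
/- Fix l ≥ 0, σ ≥ 0 and ρ > σ, and set δ = ρ² − σ². Fix z₀ ∈ ℝⁿ with ‖z₀‖ > l and set h = ‖z₀‖² − l² > 0. For v ∈ ℝⁿ let λ*(v) = (h(δ + 2⟨v, z₀⟩) + 2l²δ + 2l‖δ·z₀ + h·v‖)/h². Then for every v ∈ ℝⁿ with λ*(v) > 0, one has the identity λ*(v)·l + (‖v‖² + λ*(v)·δ)^{1/2} = ‖v − λ*(v)·z₀‖. -/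
/-!
Put `s = (l δ + ‖δ z₀ + h v‖) / h`. The definition of `λ*` then reads
`λ* h = δ + 2⟨v, z₀⟩ + 2 l s`, and expanding `‖δ z₀ + h v‖²` gives `s² = ‖v‖² + λ* δ`,
so `s` is the square root in the claim. With these two relations and `h = ‖z₀‖² - l²`,
`(λ* l + s)² - ‖v - λ* z₀‖² = λ* (δ + 2⟨v, z₀⟩ + 2 l s - λ* h) = 0`,
and both sides are nonnegative.
-/

open scoped InnerProductSpace

section ResolvingFunction

variable {E : Type*} [NormedAddCommGroup E] [InnerProductSpace ℝ E]

theorem norm_smul_add_smul_sq_s12 (a b : ℝ) (x y : E) :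
    ‖a • x + b • y‖ ^ 2 = a ^ 2 * ‖x‖ ^ 2 + 2 * a * b * ⟪x, y⟫_ℝ + b ^ 2 * ‖y‖ ^ 2 := by
  rw [norm_add_sq_real, norm_smul, norm_smul, real_inner_smul_left, real_inner_smul_right,
    mul_pow, mul_pow, Real.norm_eq_abs, Real.norm_eq_abs, sq_abs, sq_abs]
  ring

theorem sq_div_eq_norm_sq_add_mul {l δ h lam : ℝ} {z v : E} (hh : h = ‖z‖ ^ 2 - l ^ 2)
    (hh0 : h ≠ 0)
    (hlam : lam * h = δ + 2 * ⟪v, z⟫_ℝ + 2 * l * ((l * δ + ‖δ • z + h • v‖) / h)) :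
    ((l * δ + ‖δ • z + h • v‖) / h) ^ 2 = ‖v‖ ^ 2 + lam * δ := by
  have hN := norm_smul_add_smul_sq_s12 δ h z v
  field_simp at hlam ⊢
  linear_combination hN - δ * hlam - δ ^ 2 * hh + 2 * δ * h * real_inner_comm v z

theorem mul_add_eq_norm_sub_smul {l δ h lam s : ℝ} {z v : E} (hl : 0 ≤ l) (hlam0 : 0 ≤ lam)
    (hs0 : 0 ≤ s) (hh : h = ‖z‖ ^ 2 - l ^ 2) (hlam : lam * h = δ + 2 * ⟪v, z⟫_ℝ + 2 * l * s)
    (hs : s ^ 2 = ‖v‖ ^ 2 + lam * δ) :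
    lam * l + s = ‖v - lam • z‖ := by
  have hsq : (lam * l + s) ^ 2 = ‖v - lam • z‖ ^ 2 := by
    rw [norm_sub_sq_real, real_inner_smul_right, norm_smul, mul_pow, Real.norm_eq_abs, sq_abs]
    linear_combination hs - lam * hlam + lam ^ 2 * hh
  exact (pow_left_inj₀ (by positivity) (norm_nonneg _) two_ne_zero).mp hsq

end ResolvingFunction

theorem stmt_12 (n : ℕ) (l σ ρ : ℝ) (hl : 0 ≤ l) (hσ : 0 ≤ σ) (hρσ : σ < ρ)
    (δ : ℝ) (hδ : δ = ρ ^ 2 - σ ^ 2)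
    (z₀ : EuclideanSpace ℝ (Fin n)) (hz₀ : l < ‖z₀‖)
    (h : ℝ) (hh : h = ‖z₀‖ ^ 2 - l ^ 2)
    (v : EuclideanSpace ℝ (Fin n))
    (lamstar : ℝ)
    (hlamstar : lamstar = (h * (δ + 2 * (inner ℝ v z₀ : ℝ)) + 2 * l ^ 2 * δ +
        2 * l * ‖δ • z₀ + h • v‖) / h ^ 2)
    (hpos : 0 < lamstar) :
    lamstar * l + Real.sqrt (‖v‖ ^ 2 + lamstar * δ) = ‖v - lamstar • z₀‖ := by
  have hδ0 : 0 ≤ δ := by nlinarith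
  have hh0 : 0 < h := by nlinarith
  have hlam : lamstar * h =
      δ + 2 * ⟪v, z₀⟫_ℝ + 2 * l * ((l * δ + ‖δ • z₀ + h • v‖) / h) := by
    rw [hlamstar]
    field_simp
    ring
  have hs0 : 0 ≤ (l * δ + ‖δ • z₀ + h • v‖) / h := by positivity
  have hs := sq_div_eq_norm_sq_add_mul hh hh0.ne' hlam
  rw [← hs, Real.sqrt_sq hs0]
  exact mul_add_eq_norm_sub_smul hl hpos.le hs0 hh hlam hs
end

section
/- Fix l ≥ 0, σ ≥ 0 and ρ > σ, and set δ = ρ² − σ². Fix z₀ ∈ ℝⁿ with ‖z₀‖ > l and set h = ‖z₀‖² − l² > 0. For v ∈ ℝⁿ let λ(v) = max{0, (h(δ + 2⟨v, z₀⟩) + 2l²δ + 2l‖δ·z₀ + h·v‖)/h²}. Suppose v ∈ ℝⁿ satisfies v ≠ λ(v)·z₀, and define m(v) = −l·(v − λ(v)·z₀)/‖v − λ(v)·z₀‖ and u(v) = v + λ(v)·(m(v) − z₀). Then ‖u(v)‖² = ‖v‖² + δ·λ(v). -/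
/-!
Write `w = v - λ z₀` and `r = ‖w‖`. Then `u = (1 - λ l / r) w`, so `‖u‖² = (r - λ l)²`, and
expanding `r²` shows that the identity holds as soon as `λ = 0` or
`2 l r = λ (‖z₀‖² + l²) - δ - 2 ⟨v, z₀⟩`. Squared, this equation is the quadratic
`h² λ² - 2 (h (δ + 2⟨v, z₀⟩) + 2 l² δ) λ + (δ + 2⟨v, z₀⟩)² - 4 l² ‖v‖² = 0`, whose reduced
discriminant is `4 l² ‖δ z₀ + h v‖²`, so its larger root `λ₊` is the expression inside the `max`
defining `λ(v)`. By Cauchy–Schwarz, `λ₊ (‖z₀‖² + l²) - δ - 2 ⟨v, z₀⟩ ≥ 0`, hence `λ₊` also solves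
the unsquared equation.
-/

open RealInnerProductSpace

variable {E : Type*} [NormedAddCommGroup E] [InnerProductSpace ℝ E]

theorem norm_sub_smul_sq_real (v z : E) (t : ℝ) :
    ‖v - t • z‖ ^ 2 = ‖v‖ ^ 2 - 2 * t * ⟪v, z⟫ + t ^ 2 * ‖z‖ ^ 2 := by
  rw [norm_sub_sq_real, real_inner_smul_right, norm_smul, Real.norm_eq_abs, mul_pow, sq_abs]
  ring

theorem norm_smul_add_smul_sq_real (a b : ℝ) (x y : E) :
    ‖a • x + b • y‖ ^ 2 = a ^ 2 * ‖x‖ ^ 2 + 2 * (a * b) * ⟪x, y⟫ + b ^ 2 * ‖y‖ ^ 2 := by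
  rw [norm_add_sq_real, real_inner_smul_left, real_inner_smul_right, norm_smul, norm_smul,
    Real.norm_eq_abs, Real.norm_eq_abs, mul_pow, mul_pow, sq_abs, sq_abs]
  ring

theorem norm_sub_div_norm_smul_self {w : E} (hw : w ≠ 0) (c : ℝ) :
    ‖w - (c / ‖w‖) • w‖ = |‖w‖ - c| := by
  have hr : ‖w‖ ≠ 0 := norm_ne_zero_iff.mpr hw
  calc ‖w - (c / ‖w‖) • w‖ = ‖((‖w‖ - c) / ‖w‖) • w‖ := by
        congr 1; rw [sub_div, div_self hr, sub_smul, one_smul]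
    _ = |‖w‖ - c| := by
        rw [norm_smul, Real.norm_eq_abs, abs_div, abs_norm, div_mul_cancel₀ _ hr]

theorem sq_norm_sub_smul_sub_mul_eq {v z : E} {t l δ : ℝ}
    (ht : t = 0 ∨ 2 * l * ‖v - t • z‖ = t * (‖z‖ ^ 2 + l ^ 2) - δ - 2 * ⟪v, z⟫) :
    (‖v - t • z‖ - t * l) ^ 2 = ‖v‖ ^ 2 + δ * t := by
  rcases ht with rfl | hroot
  · simp
  · linear_combination norm_sub_smul_sq_real v z t - t * hroot

section CaptureRoot

/-- The paper's `λ(v)` is `max 0 (captureRoot l δ z₀ v)`. -/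
noncomputable def captureRoot (l δ : ℝ) (z v : E) : ℝ :=
  let h := ‖z‖ ^ 2 - l ^ 2
  (h * (δ + 2 * ⟪v, z⟫) + 2 * l ^ 2 * δ + 2 * l * ‖δ • z + h • v‖) / h ^ 2

variable {l δ : ℝ} {z v : E}

theorem sq_mul_captureRoot (hl : 0 ≤ l) (hz : l < ‖z‖) :
    (‖z‖ ^ 2 - l ^ 2) ^ 2 * captureRoot l δ z v = (‖z‖ ^ 2 - l ^ 2) * (δ + 2 * ⟪v, z⟫) +
      2 * l ^ 2 * δ + 2 * l * ‖δ • z + (‖z‖ ^ 2 - l ^ 2) • v‖ := by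
  have hpos : 0 < ‖z‖ ^ 2 - l ^ 2 := by nlinarith [norm_nonneg z]
  exact mul_div_cancel₀ _ (pow_ne_zero 2 hpos.ne')

theorem captureRoot_mul_sub_nonneg (hl : 0 ≤ l) (hz : l < ‖z‖) :
    0 ≤ captureRoot l δ z v * (‖z‖ ^ 2 + l ^ 2) - δ - 2 * ⟪v, z⟫ := by
  have ht := sq_mul_captureRoot (δ := δ) (v := v) hl hz
  set t := captureRoot l δ z v
  set h := ‖z‖ ^ 2 - l ^ 2 with hh
  have hpos : 0 < h := by nlinarith
  have hinner : ⟪δ • z + h • v, z⟫ = δ * ‖z‖ ^ 2 + h * ⟪v, z⟫ := by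
    rw [inner_add_left, real_inner_smul_left, real_inner_smul_left, real_inner_self_eq_norm_sq]
  have hcs : -(‖δ • z + h • v‖ * ‖z‖) ≤ δ * ‖z‖ ^ 2 + h * ⟪v, z⟫ :=
    hinner ▸ (abs_le.mp (abs_real_inner_le_norm _ _)).1
  have hscaled : h ^ 2 * (t * (‖z‖ ^ 2 + l ^ 2) - δ - 2 * ⟪v, z⟫) =
      4 * l ^ 2 * (δ * ‖z‖ ^ 2 + h * ⟪v, z⟫ + ‖δ • z + h • v‖ * ‖z‖) +
        2 * l * ‖δ • z + h • v‖ * (‖z‖ - l) ^ 2 := by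
    rw [show ‖z‖ ^ 2 + l ^ 2 = h + 2 * l ^ 2 by rw [hh]; ring]
    linear_combination (h + 2 * l ^ 2) * ht + (4 * l ^ 2 * δ + 2 * l * ‖δ • z + h • v‖) * hh
  refine nonneg_of_mul_nonneg_right (hscaled ▸ add_nonneg ?_ ?_) (pow_pos hpos 2)
  · exact mul_nonneg (by positivity) (by linarith)
  · have := norm_nonneg (δ • z + h • v)
    positivity

theorem two_mul_norm_sub_captureRoot_smul (hl : 0 ≤ l) (hz : l < ‖z‖) :
    2 * l * ‖v - captureRoot l δ z v • z‖ =
      captureRoot l δ z v * (‖z‖ ^ 2 + l ^ 2) - δ - 2 * ⟪v, z⟫ := by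
  have ht := sq_mul_captureRoot (δ := δ) (v := v) hl hz
  have hnonneg := captureRoot_mul_sub_nonneg (δ := δ) (v := v) hl hz
  set t := captureRoot l δ z v
  set h := ‖z‖ ^ 2 - l ^ 2 with hh
  have hpos : 0 < h := by nlinarith
  have hr2 := norm_sub_smul_sq_real v z t
  have hN2 := norm_smul_add_smul_sq_real δ h z v
  rw [real_inner_comm v z] at hN2
  have hsq : h ^ 2 * (t * (‖z‖ ^ 2 + l ^ 2) - δ - 2 * ⟪v, z⟫) ^ 2 =
      h ^ 2 * (2 * l * ‖v - t • z‖) ^ 2 := by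
    rw [show ‖z‖ ^ 2 + l ^ 2 = h + 2 * l ^ 2 by rw [hh]; ring]
    linear_combination
      (h ^ 2 * t - h * (δ + 2 * ⟪v, z⟫) - 2 * l ^ 2 * δ + 2 * l * ‖δ • z + h • v‖) * ht +
        4 * l ^ 2 * hN2 - 4 * l ^ 2 * h ^ 2 * hr2 + 4 * l ^ 2 * (h ^ 2 * t ^ 2 - δ ^ 2) * hh
  refine (sq_eq_sq₀ (by positivity) hnonneg).mp ?_
  exact (mul_left_cancel₀ (pow_ne_zero 2 hpos.ne') hsq).symm

end CaptureRoot

theorem stmt_13_general (n : ℕ) (l : ℝ) (hl : 0 ≤ l)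
    (δ : ℝ)
    (z₀ : EuclideanSpace ℝ (Fin n)) (hz₀ : l < ‖z₀‖)
    (h : ℝ) (hh : h = ‖z₀‖ ^ 2 - l ^ 2)
    (lam : EuclideanSpace ℝ (Fin n) → ℝ)
    (hlam : ∀ v, lam v = max 0 ((h * (δ + 2 * (inner ℝ v z₀ : ℝ)) + 2 * l ^ 2 * δ +
        2 * l * ‖δ • z₀ + h • v‖) / h ^ 2))
    (v : EuclideanSpace ℝ (Fin n)) (hv : v ≠ lam v • z₀)
    (m u : EuclideanSpace ℝ (Fin n))
    (hm : m = -((l / ‖v - lam v • z₀‖) • (v - lam v • z₀)))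
    (hu : u = v + lam v • (m - z₀)) :
    ‖u‖ ^ 2 = ‖v‖ ^ 2 + δ * lam v := by
  subst hh
  have hroot : lam v = 0 ∨
      2 * l * ‖v - lam v • z₀‖ = lam v * (‖z₀‖ ^ 2 + l ^ 2) - δ - 2 * ⟪v, z₀⟫ := by
    have hlam_v : lam v = max 0 (captureRoot l δ z₀ v) := hlam v
    rcases le_total (captureRoot l δ z₀ v) 0 with hneg | hnonneg
    · exact .inl (by rw [hlam_v, max_eq_left hneg])
    · rw [hlam_v, max_eq_right hnonneg]
      exact .inr (two_mul_norm_sub_captureRoot_smul hl hz₀)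
  have hu' : u = (v - lam v • z₀) - (lam v * l / ‖v - lam v • z₀‖) • (v - lam v • z₀) := by
    rw [hu, hm]
    module
  rw [hu', norm_sub_div_norm_smul_self (sub_ne_zero.mpr hv), sq_abs]
  exact sq_norm_sub_smul_sub_mul_eq hroot

theorem stmt_13 (n : ℕ) (l σ ρ : ℝ) (hl : 0 ≤ l) (hσ : 0 ≤ σ) (hρσ : σ < ρ)
    (δ : ℝ) (hδ : δ = ρ ^ 2 - σ ^ 2)
    (z₀ : EuclideanSpace ℝ (Fin n)) (hz₀ : l < ‖z₀‖)
    (h : ℝ) (hh : h = ‖z₀‖ ^ 2 - l ^ 2)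
    (lam : EuclideanSpace ℝ (Fin n) → ℝ)
    (hlam : ∀ v, lam v = max 0 ((h * (δ + 2 * (inner ℝ v z₀ : ℝ)) + 2 * l ^ 2 * δ +
        2 * l * ‖δ • z₀ + h • v‖) / h ^ 2))
    (v : EuclideanSpace ℝ (Fin n)) (hv : v ≠ lam v • z₀)
    (m u : EuclideanSpace ℝ (Fin n))
    (hm : m = -((l / ‖v - lam v • z₀‖) • (v - lam v • z₀)))
    (hu : u = v + lam v • (m - z₀)) :
    ‖u‖ ^ 2 = ‖v‖ ^ 2 + δ * lam v :=
  stmt_13_general n l hl δ z₀ hz₀ h hh lam hlam v hv m u hm hu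
end

section
/- Fix l ≥ 0, σ ≥ 0 and ρ > σ, and set δ = ρ² − σ². Fix z₀ ∈ ℝⁿ with ‖z₀‖ > l and set h = ‖z₀‖² − l² > 0. For v ∈ ℝⁿ let λ(v) = max{0, (h(δ + 2⟨v, z₀⟩) + 2l²δ + 2l‖δ·z₀ + h·v‖)/h²}, and for v with v ≠ λ(v)·z₀ let m(v) = −l·(v − λ(v)·z₀)/‖v − λ(v)·z₀‖. Let T > 0 and let v : [0, T] → ℝⁿ be measurable with ∫₀^T ‖v(τ)‖² dτ ≤ σ², v(τ) ≠ λ(v(τ))·z₀ for a.e. τ, and ∫₀^T λ(v(τ)) dτ = 1. Then ‖z₀ + ∫₀^T λ(v(τ))·(m(v(τ)) − z₀) dτ‖ ≤ l. -/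
open MeasureTheory

/-! Since `∫ λ = 1`, the state is `z(T) = ∫ λ • m`; the pursuer's aim point `m` lies on the sphere of
radius `l`, so `z(T)` is an average of points of the closed `l`-ball. -/

theorem norm_add_integral_smul_sub_le {α E : Type*} [MeasurableSpace α] [NormedAddCommGroup E]
    [NormedSpace ℝ E] [CompleteSpace E] {μ : Measure α} {f : α → ℝ} {g : α → E} {z : E} {l : ℝ}
    (hf : Integrable f μ) (hf_nonneg : 0 ≤ᵐ[μ] f) (hg : AEStronglyMeasurable g μ)
    (hg_le : ∀ᵐ x ∂μ, ‖g x‖ ≤ l) (hf_one : ∫ x, f x ∂μ = 1) :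
    ‖z + ∫ x, f x • (g x - z) ∂μ‖ ≤ l := by
  have hfg_le : ∀ᵐ x ∂μ, ‖f x • g x‖ ≤ f x * l := by
    filter_upwards [hf_nonneg, hg_le] with x hfx hgx
    rw [norm_smul, Real.norm_of_nonneg hfx]
    exact mul_le_mul_of_nonneg_left hgx hfx
  have hfg : Integrable (fun x => f x • g x) μ :=
    (hf.mul_const l).mono' (hf.aestronglyMeasurable.smul hg) hfg_le
  have hz : ∫ x, f x • (g x - z) ∂μ = (∫ x, f x • g x ∂μ) - z := by
    simp_rw [smul_sub]
    rw [integral_sub hfg (hf.smul_const z), integral_smul_const, hf_one, one_smul]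
  calc ‖z + ∫ x, f x • (g x - z) ∂μ‖ = ‖∫ x, f x • g x ∂μ‖ := by rw [hz, add_sub_cancel]
    _ ≤ ∫ x, f x * l ∂μ := norm_integral_le_of_norm_le (hf.mul_const l) hfg_le
    _ = l := by rw [integral_mul_const, hf_one, one_mul]

theorem norm_neg_div_norm_smul {E : Type*} [NormedAddCommGroup E] [NormedSpace ℝ E] {l : ℝ}
    (hl : 0 ≤ l) {w : E} (hw : w ≠ 0) : ‖-((l / ‖w‖) • w)‖ = l := by
  rw [norm_neg, norm_smul, Real.norm_of_nonneg (div_nonneg hl (norm_nonneg w)),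
    div_mul_cancel₀ l (norm_ne_zero_iff.mpr hw)]

theorem stmt_16_general (n : ℕ) (l : ℝ) (hl : 0 ≤ l)
    (δ : ℝ)
    (z₀ : EuclideanSpace ℝ (Fin n))
    (h : ℝ)
    (lam : EuclideanSpace ℝ (Fin n) → ℝ)
    (hlam : ∀ v, lam v = max 0 ((h * (δ + 2 * (inner ℝ v z₀ : ℝ)) + 2 * l ^ 2 * δ +
        2 * l * ‖δ • z₀ + h • v‖) / h ^ 2))
    (m : EuclideanSpace ℝ (Fin n) → EuclideanSpace ℝ (Fin n))
    (hm : ∀ v, v ≠ lam v • z₀ →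
      m v = -((l / ‖v - lam v • z₀‖) • (v - lam v • z₀)))
    (T : ℝ) (hT : 0 < T)
    (v : ℝ → EuclideanSpace ℝ (Fin n)) (hv : Measurable v)
    (hvae : ∀ᵐ τ ∂(volume.restrict (Set.Icc (0 : ℝ) T)), v τ ≠ lam (v τ) • z₀)
    (hcap : (∫ τ in (0:ℝ)..T, lam (v τ)) = 1) :
    ‖z₀ + ∫ τ in (0:ℝ)..T, lam (v τ) • (m (v τ) - z₀)‖ ≤ l := by
  rw [intervalIntegral.integral_of_le hT.le] at hcap ⊢
  have hlam_nonneg (u) : 0 ≤ lam u := (hlam u).symm ▸ le_max_left _ _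
  have hvae_Ioc := ae_restrict_of_ae_restrict_of_subset Set.Ioc_subset_Icc_self hvae
  have hlam_int : Integrable (fun τ => lam (v τ)) (volume.restrict (Set.Ioc 0 T)) :=
    .of_integral_ne_zero (by rw [hcap]; exact one_ne_zero)
  have hm_meas : AEStronglyMeasurable (fun τ => m (v τ)) (volume.restrict (Set.Ioc 0 T)) := by
    have hw : AEMeasurable (fun τ => v τ - lam (v τ) • z₀) (volume.restrict (Set.Ioc 0 T)) :=
      hv.aemeasurable.sub (hlam_int.aemeasurable.smul_const z₀)
    refine ((hw.norm.const_div l).smul hw).neg.aestronglyMeasurable.congr ?_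
    filter_upwards [hvae_Ioc] with τ hτ
    exact (hm _ hτ).symm
  refine norm_add_integral_smul_sub_le hlam_int
    (.of_forall fun τ => hlam_nonneg (v τ)) hm_meas ?_ hcap
  filter_upwards [hvae_Ioc] with τ hτ
  rw [hm _ hτ, norm_neg_div_norm_smul hl (sub_ne_zero.mpr hτ)]

theorem stmt_16 (n : ℕ) (l σ ρ : ℝ) (hl : 0 ≤ l) (hσ : 0 ≤ σ) (hρσ : σ < ρ)
    (δ : ℝ) (hδ : δ = ρ ^ 2 - σ ^ 2)
    (z₀ : EuclideanSpace ℝ (Fin n)) (hz₀ : l < ‖z₀‖)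
    (h : ℝ) (hh : h = ‖z₀‖ ^ 2 - l ^ 2)
    (lam : EuclideanSpace ℝ (Fin n) → ℝ)
    (hlam : ∀ v, lam v = max 0 ((h * (δ + 2 * (inner ℝ v z₀ : ℝ)) + 2 * l ^ 2 * δ +
        2 * l * ‖δ • z₀ + h • v‖) / h ^ 2))
    (m : EuclideanSpace ℝ (Fin n) → EuclideanSpace ℝ (Fin n))
    (hm : ∀ v, v ≠ lam v • z₀ →
      m v = -((l / ‖v - lam v • z₀‖) • (v - lam v • z₀)))
    (T : ℝ) (hT : 0 < T)
    (v : ℝ → EuclideanSpace ℝ (Fin n)) (hv : Measurable v)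
    (hvint : (∫ τ in (0:ℝ)..T, ‖v τ‖ ^ 2) ≤ σ ^ 2)
    (hvae : ∀ᵐ τ ∂(volume.restrict (Set.Icc (0 : ℝ) T)), v τ ≠ lam (v τ) • z₀)
    (hcap : (∫ τ in (0:ℝ)..T, lam (v τ)) = 1) :
    ‖z₀ + ∫ τ in (0:ℝ)..T, lam (v τ) • (m (v τ) - z₀)‖ ≤ l :=
  stmt_16_general n l hl δ z₀ h lam hlam m hm T hT v hv hvae hcap
end

section
/- Fix l ≥ 0, σ ≥ 0 and ρ > σ, and set δ = ρ² − σ². Fix z₀ ∈ ℝⁿ with ‖z₀‖ > l and set h = ‖z₀‖² − l² > 0. For v ∈ ℝⁿ let λ(v) = max{0, (h(δ + 2⟨v, z₀⟩) + 2l²δ + 2l‖δ·z₀ + h·v‖)/h²}, and for v with v ≠ λ(v)·z₀ let m(v) = −l·(v − λ(v)·z₀)/‖v − λ(v)·z₀‖ and u(v) = v + λ(v)·(m(v) − z₀). Let T > 0 and let v : [0, T] → ℝⁿ be measurable with ∫₀^T ‖v(τ)‖² dτ ≤ σ², v(τ) ≠ λ(v(τ))·z₀ for a.e. τ, and ∫₀^T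 λ(v(τ)) dτ = 1. Then ∫₀^T ‖u(v(τ))‖² dτ ≤ ρ². -/
/-!
For `λ > 0` the defining formula makes `λ` the larger root of
`h²λ² - 2(h(δ + 2⟪v, z₀⟫) + 2l²δ)λ + (δ + 2⟪v, z₀⟫)² - 4l²‖v‖² = 0`,
which is the squared form of `λ(h + 2l²) - (δ + 2⟪v, z₀⟫) = 2l‖v - λz₀‖`. Since `u(v)` is
`v - λz₀` shortened by `λl`, this is exactly the energy identity `‖u(v)‖² = ‖v‖² + δλ(v)`.
Integrating it against `∫ λ(v) = 1` gives `∫ ‖u‖² = ∫ ‖v‖² + δ ≤ σ² + δ = ρ²`.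
-/

open MeasureTheory

lemma norm_sub_div_norm_smul_self_s17 {F : Type*} [NormedAddCommGroup F] [NormedSpace ℝ F]
    {p : F} (hp : p ≠ 0) (c : ℝ) : ‖p - (c / ‖p‖) • p‖ = |‖p‖ - c| := by
  have hp' : ‖p‖ ≠ 0 := norm_ne_zero_iff.mpr hp
  calc ‖p - (c / ‖p‖) • p‖ = ‖(1 - c / ‖p‖) • p‖ := by rw [sub_smul, one_smul]
    _ = |(1 - c / ‖p‖) * ‖p‖| := by rw [norm_smul, Real.norm_eq_abs, abs_mul, abs_norm]
    _ = |‖p‖ - c| := by rw [sub_mul, one_mul, div_mul_cancel₀ _ hp']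

section EnergyIdentity

variable {E : Type*} [NormedAddCommGroup E] [InnerProductSpace ℝ E]

lemma sq_norm_sub_smul_sub_mul_eq_s17 {z w : E} {l h δ lam : ℝ} (hz : ‖z‖ ^ 2 = h + l ^ 2)
    (hh : 0 < h) (hl : 0 ≤ l) (hδ : 0 ≤ δ) (hlam : 0 ≤ lam)
    (hroot : h ^ 2 * lam = h * (δ + 2 * inner ℝ w z) + 2 * l ^ 2 * δ +
      2 * l * ‖δ • z + h • w‖) :
    (‖w - lam • z‖ - lam * l) ^ 2 = ‖w‖ ^ 2 + δ * lam := by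
  set s := inner ℝ w z
  set P := ‖w - lam • z‖
  set B := ‖δ • z + h • w‖
  have hP : P ^ 2 = ‖w‖ ^ 2 - 2 * lam * s + lam ^ 2 * (h + l ^ 2) := by
    rw [norm_sub_sq_real, real_inner_smul_right, norm_smul, mul_pow, Real.norm_eq_abs, sq_abs,
      hz]
    ring
  have hB : B ^ 2 = δ ^ 2 * (h + l ^ 2) + 2 * δ * h * s + h ^ 2 * ‖w‖ ^ 2 := by
    rw [norm_add_sq_real, real_inner_smul_left, real_inner_smul_right, real_inner_comm,
      norm_smul, norm_smul, mul_pow, mul_pow, Real.norm_eq_abs, Real.norm_eq_abs, sq_abs,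
      sq_abs, hz]
    ring
  set y := lam * (h + 2 * l ^ 2) - (δ + 2 * s)
  -- square `2lB = h²λ - h(δ + 2s) - 2l²δ` and eliminate `B²` and `P²`
  have hy_sq : y ^ 2 = (2 * l * P) ^ 2 := by
    refine mul_left_cancel₀ (pow_ne_zero 2 hh.ne') ?_
    linear_combination (-(4 * l ^ 2) * h ^ 2) * hP + 4 * l ^ 2 * hB +
      (h ^ 2 * lam - h * (δ + 2 * s) - 2 * l ^ 2 * δ + 2 * l * B) * hroot
  -- `y ≥ 0` singles out the root `y = 2lP`, i.e. the larger root `λ`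
  have hy_nonneg : 0 ≤ y := by
    have : h * y = 2 * l ^ 2 * h * lam + 2 * l ^ 2 * δ + 2 * l * B := by
      linear_combination hroot
    have : 0 ≤ h * y := by rw [this]; positivity
    exact nonneg_of_mul_nonneg_right (by linarith) hh
  have hy : y = 2 * l * P := (pow_left_inj₀ hy_nonneg (by positivity) two_ne_zero).mp hy_sq
  linear_combination hP + lam * hy

end EnergyIdentity

lemma intervalIntegral_le_add_of_ae_eq_add_mul {f g k : ℝ → ℝ} {a b c δ : ℝ} (hδ : 0 ≤ δ)
    (hfg : ∀ᵐ τ, τ ∈ Set.uIoc a b → f τ = g τ + δ * k τ)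
    (hg : ∫ τ in a..b, g τ ≤ c) (hk : ∫ τ in a..b, k τ = 1) :
    ∫ τ in a..b, f τ ≤ c + δ := by
  have hk_int : IntervalIntegrable k volume a b := by
    by_contra hk'
    rw [intervalIntegral.integral_undef hk'] at hk
    exact zero_ne_one hk
  rw [intervalIntegral.integral_congr_ae hfg]
  by_cases hg_int : IntervalIntegrable g volume a b
  · rw [intervalIntegral.integral_add hg_int (hk_int.const_mul δ),
      intervalIntegral.integral_const_mul, hk]
    linarith
  · have hsum : ¬ IntervalIntegrable (fun τ => g τ + δ * k τ) volume a b := fun hsum =>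
      hg_int (by simpa using hsum.sub (hk_int.const_mul δ))
    rw [intervalIntegral.integral_undef hsum]
    rw [intervalIntegral.integral_undef hg_int] at hg
    linarith

theorem stmt_17_general (n : ℕ) (l σ ρ : ℝ) (hl : 0 ≤ l) (hσ : 0 ≤ σ) (hρσ : σ < ρ)
    (δ : ℝ) (hδ : δ = ρ ^ 2 - σ ^ 2)
    (z₀ : EuclideanSpace ℝ (Fin n)) (hz₀ : l < ‖z₀‖)
    (h : ℝ) (hh : h = ‖z₀‖ ^ 2 - l ^ 2)
    (lam : EuclideanSpace ℝ (Fin n) → ℝ)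
    (hlam : ∀ v, lam v = max 0 ((h * (δ + 2 * (inner ℝ v z₀ : ℝ)) + 2 * l ^ 2 * δ +
        2 * l * ‖δ • z₀ + h • v‖) / h ^ 2))
    (m u : EuclideanSpace ℝ (Fin n) → EuclideanSpace ℝ (Fin n))
    (hm : ∀ v, v ≠ lam v • z₀ →
      m v = -((l / ‖v - lam v • z₀‖) • (v - lam v • z₀)))
    (hu : ∀ v, u v = v + lam v • (m v - z₀))
    (T : ℝ) (hT : 0 < T)
    (v : ℝ → EuclideanSpace ℝ (Fin n))
    (hvint : (∫ τ in (0:ℝ)..T, ‖v τ‖ ^ 2) ≤ σ ^ 2)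
    (hvae : ∀ᵐ τ ∂(volume.restrict (Set.Icc (0 : ℝ) T)), v τ ≠ lam (v τ) • z₀)
    (hcap : (∫ τ in (0:ℝ)..T, lam (v τ)) = 1) :
    (∫ τ in (0:ℝ)..T, ‖u (v τ)‖ ^ 2) ≤ ρ ^ 2 := by
  have hδ_nonneg : 0 ≤ δ := by nlinarith
  have hh_pos : 0 < h := by nlinarith
  have energy (w) (hw : w ≠ lam w • z₀) : ‖u w‖ ^ 2 = ‖w‖ ^ 2 + δ * lam w := by
    have hu_eq : u w = w - lam w • z₀ - (lam w * l / ‖w - lam w • z₀‖) • (w - lam w • z₀) := by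
      rw [hu, hm w hw]
      module
    rw [hu_eq, norm_sub_div_norm_smul_self_s17 (sub_ne_zero.mpr hw), sq_abs]
    rcases le_total ((h * (δ + 2 * (inner ℝ w z₀ : ℝ)) + 2 * l ^ 2 * δ +
        2 * l * ‖δ • z₀ + h • w‖) / h ^ 2) 0 with hneg | hpos
    · simp [hlam w, max_eq_left hneg]
    · rw [hlam w, max_eq_right hpos]
      refine sq_norm_sub_smul_sub_mul_eq_s17 (by rw [hh]; ring) hh_pos hl hδ_nonneg hpos ?_
      field_simp
  have hae : ∀ᵐ τ, τ ∈ Set.uIoc 0 T → ‖u (v τ)‖ ^ 2 = ‖v τ‖ ^ 2 + δ * lam (v τ) := by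
    filter_upwards [(ae_restrict_iff' measurableSet_Icc).mp hvae] with τ hτ hτT
    rw [Set.uIoc_of_le hT.le] at hτT
    exact energy _ (hτ (Set.Ioc_subset_Icc_self hτT))
  calc (∫ τ in (0:ℝ)..T, ‖u (v τ)‖ ^ 2) ≤ σ ^ 2 + δ :=
        intervalIntegral_le_add_of_ae_eq_add_mul hδ_nonneg hae hvint hcap
    _ = ρ ^ 2 := by rw [hδ]; ring

theorem stmt_17 (n : ℕ) (l σ ρ : ℝ) (hl : 0 ≤ l) (hσ : 0 ≤ σ) (hρσ : σ < ρ)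
    (δ : ℝ) (hδ : δ = ρ ^ 2 - σ ^ 2)
    (z₀ : EuclideanSpace ℝ (Fin n)) (hz₀ : l < ‖z₀‖)
    (h : ℝ) (hh : h = ‖z₀‖ ^ 2 - l ^ 2)
    (lam : EuclideanSpace ℝ (Fin n) → ℝ)
    (hlam : ∀ v, lam v = max 0 ((h * (δ + 2 * (inner ℝ v z₀ : ℝ)) + 2 * l ^ 2 * δ +
        2 * l * ‖δ • z₀ + h • v‖) / h ^ 2))
    (m u : EuclideanSpace ℝ (Fin n) → EuclideanSpace ℝ (Fin n))
    (hm : ∀ v, v ≠ lam v • z₀ →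
      m v = -((l / ‖v - lam v • z₀‖) • (v - lam v • z₀)))
    (hu : ∀ v, u v = v + lam v • (m v - z₀))
    (T : ℝ) (hT : 0 < T)
    (v : ℝ → EuclideanSpace ℝ (Fin n)) (hv : Measurable v)
    (hvint : (∫ τ in (0:ℝ)..T, ‖v τ‖ ^ 2) ≤ σ ^ 2)
    (hvae : ∀ᵐ τ ∂(volume.restrict (Set.Icc (0 : ℝ) T)), v τ ≠ lam (v τ) • z₀)
    (hcap : (∫ τ in (0:ℝ)..T, lam (v τ)) = 1) :
    (∫ τ in (0:ℝ)..T, ‖u (v τ)‖ ^ 2) ≤ ρ ^ 2 :=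
  stmt_17_general n l σ ρ hl hσ hρσ δ hδ z₀ hz₀ h hh lam hlam m u hm hu T hT v hvint hvae hcap
end
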